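/- Let f, g be supported in a dyadic cube Q₀ and define B_j(g,f) = Σ_{K∈𝒟} ⟨|g|⟩_{3K} Σ_{P⊂3K, ℓP=2^{-j}ℓK} ⟨f,h_P⟩². Then the portion of B_j coming from points outside Q₀ satisfies B_j|_{Q₀^∁}(g,f) ≲_d 2^{-jd} ⟨|g|⟩_{Q₀} ⟨|f|⟩_{Q₀}² |Q₀|. -/

import Mathlib

open MeasureTheory ENNReal Set

structure DyadicCube (d : ℕ) where
  j : ℤ
  m : Fin d → ℤ

namespace DyadicCube

variable {d : ℕ}

/-- side length `2^{-j}` of the dyadic cube. -/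
noncomputable def side (Q : DyadicCube d) : ℝ := 2 ^ (-Q.j)

/-- the dyadic cube `2^{-j}([0,1)^d + m)` as a subset of `ℝ^d`. -/
def toSet (Q : DyadicCube d) : Set (Fin d → ℝ) :=
  {x | ∀ i, (Q.m i : ℝ) * 2 ^ (-Q.j) ≤ x i ∧ x i < ((Q.m i : ℝ) + 1) * 2 ^ (-Q.j)}

/-- the concentric triple `3Q`. -/
def triple (Q : DyadicCube d) : Set (Fin d → ℝ) :=
  {x | ∀ i, ((Q.m i : ℝ) - 1) * 2 ^ (-Q.j) ≤ x i ∧ x i < ((Q.m i : ℝ) + 2) * 2 ^ (-Q.j)}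

/-- the centre of the cube. -/
noncomputable def center (Q : DyadicCube d) : Fin d → ℝ :=
  fun i => ((Q.m i : ℝ) + 1 / 2) * 2 ^ (-Q.j)

/-- the `k`-fold dyadic ancestor `Q^{(k)}`. -/
def ancestor (k : ℕ) (Q : DyadicCube d) : DyadicCube d :=
  ⟨Q.j - k, fun i => Int.fdiv (Q.m i) (2 ^ k)⟩

/-- the `k`-grandchildren `ch_k(Q)`. -/
def children (k : ℕ) (Q : DyadicCube d) : Set (DyadicCube d) :=
  {P | P.j = Q.j + k ∧ P.toSet ⊆ Q.toSet}

/-- distance between two sets in the `ℓ^∞` metric of `ℝ^d`. -/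
noncomputable def sdist (A B : Set (Fin d → ℝ)) : ℝ :=
  (⨅ a ∈ A, EMetric.infEdist a B).toReal

/-- average `⟨f⟩_A` of `f` over `A`. -/
noncomputable def avg (f : (Fin d → ℝ) → ℝ) (A : Set (Fin d → ℝ)) : ℝ :=
  (volume A).toReal⁻¹ * ∫ x in A, f x

/-- average `⟨|f|⟩_A`. -/
noncomputable def avgAbs (f : (Fin d → ℝ) → ℝ) (A : Set (Fin d → ℝ)) : ℝ :=
  avg (fun x => |f x|) A

/-- `Q` is `r`-good with parameter `γ`. -/
def IsGood (r : ℕ) (γ : ℝ) (Q : DyadicCube d) : Prop :=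
  ∀ P : DyadicCube d, 2 ^ r * Q.side ≤ P.side →
    Q.side ^ γ * P.side ^ (1 - γ) < sdist Q.toSet (frontier P.toSet)

/-- martingale (Haar) difference `Δ_Q f`. -/
noncomputable def mdiff (f : (Fin d → ℝ) → ℝ) (Q : DyadicCube d) (x : Fin d → ℝ) : ℝ :=
  ∑' J : {J : DyadicCube d // J ∈ children 1 Q},
    Set.indicator J.1.toSet (fun _ => avg f J.1.toSet - avg f Q.toSet) x

/-- `Σ_ε ⟨f, h_Q^ε⟩² = ‖Δ_Q f‖_{L²}²`, the total squared Haar coefficient on `Q`. -/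
noncomputable def haarSq (f : (Fin d → ℝ) → ℝ) (P : DyadicCube d) : ℝ :=
  ∫ x in P.toSet, (mdiff f P x) ^ 2

end DyadicCube

open DyadicCube

variable {d : ℕ}

/-- the pointwise integrand of the dyadic form `B_j(g,f)`:
`Σ_K ⟨|g|⟩_{3K} Σ_{P ⊂ 3K, ℓP = 2^{-j}ℓK} ⟨f,h_P⟩²/|P| 1_P(x)`. -/
noncomputable def BjIntegrand (j : ℕ) (g f : (Fin d → ℝ) → ℝ) (x : Fin d → ℝ) : ℝ≥0∞ :=
  ∑' K : DyadicCube d,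
    ∑' P : {P : DyadicCube d // P.j = K.j + j ∧ P.toSet ⊆ K.triple},
      ENNReal.ofReal (avgAbs g K.triple *
        Set.indicator P.1.toSet (fun _ => haarSq f P.1 / (volume P.1.toSet).toReal) x)


/-!
Unfolding the integral, `B_j|_{Q₀ᶜ}(g,f) = ∑_K ∑_P ⟨|g|⟩_{3K} ‖Δ_P f‖₂² |P ∖ Q₀| / |P|`.
A term survives only if `P` meets `Q₀` (otherwise `Δ_P f = 0`, as `f` is supported in `Q₀`)
without being contained in it, i.e. `P` is a strict dyadic ancestor of `Q₀`. Hence each `K`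
carries at most one such `P`, namely the one containing the centre of `Q₀`, and at each scale
at most `3^d` cubes `K` have a triple containing that centre. The crude `L¹` bounds
`⟨|g|⟩_{3K} ≤ ‖g‖₁ / |3K|` and `‖Δ_P f‖₂² ≤ 4^{d+1} ‖f‖₁² / |P|` then show that the ancestor of
height `k + 1` contributes at most `4 · 4^{-k} 2^{-jd} ⟨|g|⟩_{Q₀} ⟨|f|⟩_{Q₀}² |Q₀|`, and the
geometric series gives the claim with `C = 16/3`.
-/

lemma tsum_mem_of_support_subsingleton {α β : Type*} [AddCommMonoid α] [TopologicalSpace α]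
    {f : β → α} (hf : (Function.support f).Subsingleton) {s : Set α} (h0 : 0 ∈ s)
    (hs : ∀ b, f b ∈ s) : ∑' b, f b ∈ s := by
  obtain h | ⟨b, hb⟩ := hf.eq_empty_or_singleton
  · simpa [Function.support_eq_empty_iff.mp h] using h0
  · rw [tsum_eq_single b fun b' hb' => Function.notMem_support.mp (by rw [hb]; exact hb')]
    exact hs b

namespace DyadicCube

def equivProd : DyadicCube d ≃ ℤ × (Fin d → ℤ) where
  toFun Q := (Q.j, Q.m)
  invFun p := ⟨p.1, p.2⟩

instance : Countable (DyadicCube d) := Countable.of_equiv _ equivProd.symm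

lemma side_pos (Q : DyadicCube d) : 0 < Q.side := by unfold side; positivity

lemma side_eq_two_pow_mul {P Q : DyadicCube d} {t : ℕ} (h : P.j = Q.j + t) :
    Q.side = 2 ^ t * P.side := by
  rw [side, side, h, neg_add, zpow_add₀ two_ne_zero, zpow_neg 2 (t : ℤ), zpow_natCast]
  field_simp

lemma mem_toSet_iff_floor {Q : DyadicCube d} {x : Fin d → ℝ} :
    x ∈ Q.toSet ↔ ∀ i, ⌊x i * 2 ^ Q.j⌋ = Q.m i := by
  have h2 : (0 : ℝ) < 2 ^ Q.j := by positivity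
  simp only [toSet, Set.mem_ofPred_eq, Int.floor_eq_iff, zpow_neg, mul_inv_le_iff₀ h2,
    lt_mul_inv_iff₀ h2]

lemma mem_triple_iff_floor {Q : DyadicCube d} {x : Fin d → ℝ} :
    x ∈ Q.triple ↔ ∀ i, ⌊x i * 2 ^ Q.j⌋ ∈ Finset.Icc (Q.m i - 1) (Q.m i + 1) := by
  have h2 : (0 : ℝ) < 2 ^ Q.j := by positivity
  refine forall_congr' fun i => ?_
  rw [Finset.mem_Icc, Int.le_floor, Int.le_iff_lt_add_one, Int.floor_lt, zpow_neg,
    mul_inv_le_iff₀ h2, lt_mul_inv_iff₀ h2]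
  push_cast
  ring_nf

lemma center_mem_toSet (Q : DyadicCube d) : Q.center ∈ Q.toSet := fun i => by
  have := Q.side_pos
  unfold center
  unfold side at this
  constructor <;> nlinarith

lemma eq_of_j_eq_of_mem {P Q : DyadicCube d} (hj : P.j = Q.j) {x : Fin d → ℝ}
    (hP : x ∈ P.toSet) (hQ : x ∈ Q.toSet) : P = Q := by
  rw [mem_toSet_iff_floor] at hP hQ
  cases P; cases Q
  simp only [mk.injEq] at hj ⊢
  subst hj
  exact ⟨rfl, funext fun i => (hP i).symm.trans (hQ i)⟩

lemma toSet_subset_of_j_le {P Q : DyadicCube d} (hj : Q.j ≤ P.j)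
    (hPQ : (P.toSet ∩ Q.toSet).Nonempty) : P.toSet ⊆ Q.toSet := by
  obtain ⟨y, hyP, hyQ⟩ := hPQ
  obtain ⟨t, ht⟩ : ∃ t : ℕ, P.j = Q.j + t := ⟨(P.j - Q.j).toNat, by omega⟩
  have hscale : ∀ x : Fin d → ℝ, ∀ i, ⌊x i * 2 ^ Q.j⌋ = ⌊x i * 2 ^ P.j⌋ / (2 ^ t : ℕ) := by
    intro x i
    rw [← Int.floor_div_natCast, ht, zpow_add₀ two_ne_zero]
    push_cast
    rw [zpow_natCast, ← mul_assoc, mul_div_cancel_right₀ _ (by positivity)]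
  intro x hxP
  rw [mem_toSet_iff_floor] at hxP hyP hyQ ⊢
  intro i
  rw [← hyQ i, hscale, hscale, hxP, hyP]

lemma tsum_indicator_triple_le (n : ℤ) (y : Fin d → ℝ) (c : ℝ≥0∞) :
    ∑' m : Fin d → ℤ, (⟨n, m⟩ : DyadicCube d).triple.indicator (fun _ => c) y ≤ 3 ^ d * c := by
  classical
  set S := Fintype.piFinset fun i => Finset.Icc (⌊y i * 2 ^ n⌋ - 1) (⌊y i * 2 ^ n⌋ + 1)
  have hS : ∀ m, y ∈ (⟨n, m⟩ : DyadicCube d).triple ↔ m ∈ S := by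
    intro m
    simp only [mem_triple_iff_floor, S, Fintype.mem_piFinset, Finset.mem_Icc]
    exact forall_congr' fun i => by omega
  have hcard : S.card = 3 ^ d := by
    simp only [S, Fintype.card_piFinset, Int.card_Icc,
      show ∀ a : ℤ, (a + 1 + 1 - (a - 1)).toNat = 3 by omega]
    simp
  simp only [Set.indicator_apply, hS]
  rw [tsum_eq_sum (s := S) fun m hm => if_neg hm, Finset.sum_ite_mem, Finset.inter_self,
    Finset.sum_const, hcard, nsmul_eq_mul]
  norm_cast

lemma tsum_ite_indicator_triple_le (N : ℤ) (y : Fin d → ℝ) (b : ℤ → ℝ≥0∞) :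
    ∑' K : DyadicCube d, (if K.j < N then K.triple.indicator (fun _ => b K.j) y else 0) ≤
      3 ^ d * ∑' k : ℕ, b (N - 1 - k) := by
  have hinj : Function.Injective fun k : ℕ => N - 1 - k := fun k l h => by simpa using h
  have hsupp : Function.support (fun n : ℤ => if n < N then 3 ^ d * b n else 0) ⊆
      Set.range fun k : ℕ => N - 1 - k := fun n hn =>
    have hn : n < N := by_contra fun h => hn (if_neg h)
    ⟨(N - 1 - n).toNat, by simp only; omega⟩
  calc ∑' K : DyadicCube d, (if K.j < N then K.triple.indicator (fun _ => b K.j) y else 0)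
      = ∑' n, ∑' m, (if n < N then (⟨n, m⟩ : DyadicCube d).triple.indicator (fun _ => b n) y
        else 0) := by
        rw [← ENNReal.tsum_prod]
        exact (equivProd.symm.tsum_eq _).symm
    _ ≤ ∑' n : ℤ, if n < N then 3 ^ d * b n else 0 := by
        gcongr with n
        split_ifs
        · exact tsum_indicator_triple_le n y _
        · simp
    _ = ∑' k : ℕ, 3 ^ d * b (N - 1 - k) := by
        rw [← hinj.tsum_eq hsupp]
        exact tsum_congr fun k => if_pos (by omega)
    _ = _ := ENNReal.tsum_mul_left

lemma toSet_eq_pi (Q : DyadicCube d) :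
    Q.toSet = univ.pi fun i => Ico ((Q.m i : ℝ) * Q.side) ((Q.m i + 1) * Q.side) := by
  ext x; simp [toSet, side]

lemma triple_eq_pi (Q : DyadicCube d) :
    Q.triple = univ.pi fun i => Ico ((Q.m i - 1 : ℝ) * Q.side) ((Q.m i + 2) * Q.side) := by
  ext x; simp [triple, side]

lemma measurableSet_toSet (Q : DyadicCube d) : MeasurableSet Q.toSet := by
  rw [toSet_eq_pi]
  exact .univ_pi fun _ => measurableSet_Ico

lemma volume_toSet (Q : DyadicCube d) : volume Q.toSet = ENNReal.ofReal (Q.side ^ d) := by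
  simp_rw [toSet_eq_pi, volume_pi_pi, Real.volume_Ico,
    show ∀ a : ℝ, (a + 1) * Q.side - a * Q.side = Q.side by intro; ring]
  rw [Finset.prod_const, Finset.card_univ, Fintype.card_fin, ENNReal.ofReal_pow Q.side_pos.le]

lemma volume_triple (Q : DyadicCube d) :
    volume Q.triple = ENNReal.ofReal ((3 * Q.side) ^ d) := by
  simp_rw [triple_eq_pi, volume_pi_pi, Real.volume_Ico,
    show ∀ a : ℝ, (a + 2) * Q.side - (a - 1) * Q.side = 3 * Q.side by intro; ring]
  rw [Finset.prod_const, Finset.card_univ, Fintype.card_fin,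
    ENNReal.ofReal_pow (by linarith [Q.side_pos])]

lemma toReal_volume_toSet (Q : DyadicCube d) : (volume Q.toSet).toReal = Q.side ^ d := by
  rw [volume_toSet, ENNReal.toReal_ofReal (pow_nonneg Q.side_pos.le d)]

lemma toReal_volume_triple (Q : DyadicCube d) : (volume Q.triple).toReal = (3 * Q.side) ^ d := by
  rw [volume_triple, ENNReal.toReal_ofReal (pow_nonneg (by linarith [Q.side_pos]) d)]

lemma abs_avg_le {f : (Fin d → ℝ) → ℝ} (hf : Integrable f) (A : Set (Fin d → ℝ)) :
    |avg f A| ≤ (volume A).toReal⁻¹ * ∫ x, |f x| := by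
  rw [avg, abs_mul, abs_of_nonneg (inv_nonneg.mpr ENNReal.toReal_nonneg)]
  gcongr
  calc |∫ x in A, f x| ≤ ∫ x in A, |f x| := abs_integral_le_integral_abs
    _ ≤ ∫ x, |f x| := setIntegral_le_integral hf.abs (.of_forall fun _ => abs_nonneg _)

lemma avgAbs_nonneg (f : (Fin d → ℝ) → ℝ) (A : Set (Fin d → ℝ)) : 0 ≤ avgAbs f A :=
  mul_nonneg (inv_nonneg.mpr ENNReal.toReal_nonneg) (integral_nonneg fun _ => abs_nonneg _)

lemma avgAbs_le {f : (Fin d → ℝ) → ℝ} (hf : Integrable f) (A : Set (Fin d → ℝ)) :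
    avgAbs f A ≤ (volume A).toReal⁻¹ * ∫ x, |f x| := by
  unfold avgAbs
  simpa only [abs_abs] using (le_abs_self _).trans (abs_avg_le hf.abs A)

lemma integral_abs_eq_mul_avgAbs {f : (Fin d → ℝ) → ℝ} {Q : DyadicCube d}
    (hf : Function.support f ⊆ Q.toSet) : ∫ x, |f x| = Q.side ^ d * avgAbs f Q.toSet := by
  rw [avgAbs, avg, toReal_volume_toSet, mul_inv_cancel_left₀ (pow_pos Q.side_pos d).ne',
    setIntegral_eq_integral_of_forall_compl_eq_zero]
  intro x hx
  rw [abs_eq_zero]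
  exact Function.notMem_support.mp fun h => hx (hf h)

lemma haarSq_nonneg (f : (Fin d → ℝ) → ℝ) (P : DyadicCube d) : 0 ≤ haarSq f P :=
  integral_nonneg fun _ => sq_nonneg _

lemma haarSq_eq_zero_of_eqOn_zero {f : (Fin d → ℝ) → ℝ} {P : DyadicCube d}
    (hf : ∀ x ∈ P.toSet, f x = 0) : haarSq f P = 0 := by
  have havg : ∀ A ⊆ P.toSet, avg f A = 0 := fun A hA => by
    rw [avg, setIntegral_eq_zero_of_forall_eq_zero fun x hx => hf x (hA hx), mul_zero]
  have hmdiff : ∀ x, mdiff f P x = 0 := fun x => by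
    simp [mdiff, havg _ subset_rfl, fun J : {J // J ∈ children 1 P} => havg _ J.2.2]
  simp [haarSq, hmdiff]

lemma abs_mdiff_le {f : (Fin d → ℝ) → ℝ} (hf : Integrable f) (P : DyadicCube d)
    (x : Fin d → ℝ) : |mdiff f P x| ≤ 2 ^ (d + 1) * (∫ y, |f y|) / P.side ^ d := by
  classical
  set M := 2 ^ (d + 1) * (∫ y, |f y|) / P.side ^ d
  have hA : 0 ≤ ∫ y, |f y| := integral_nonneg fun y => abs_nonneg (f y)
  have hM : 0 ≤ M := div_nonneg (mul_nonneg (by positivity) hA) (pow_pos P.side_pos d).le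
  change mdiff f P x ∈ {r : ℝ | |r| ≤ M}
  refine tsum_mem_of_support_subsingleton ?_ (by simpa using hM) fun J => ?_
  · intro J hJ J' hJ'
    exact Subtype.ext (eq_of_j_eq_of_mem (J.2.1.trans J'.2.1.symm)
      (Set.mem_of_indicator_ne_zero hJ) (Set.mem_of_indicator_ne_zero hJ'))
  rw [Set.mem_ofPred_eq, Set.indicator_apply]
  split_ifs
  · have hside : P.side = 2 ^ 1 * J.1.side := side_eq_two_pow_mul J.2.1
    have := J.1.side_pos
    calc |avg f J.1.toSet - avg f P.toSet| ≤ |avg f J.1.toSet| + |avg f P.toSet| := abs_sub _ _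
      _ ≤ (J.1.side ^ d)⁻¹ * (∫ y, |f y|) + (P.side ^ d)⁻¹ * ∫ y, |f y| := by
        rw [← toReal_volume_toSet, ← toReal_volume_toSet]
        exact add_le_add (abs_avg_le hf _) (abs_avg_le hf _)
      _ = (2 ^ d + 1) * (∫ y, |f y|) / P.side ^ d := by
        rw [hside, pow_one, mul_pow]
        field_simp
      _ ≤ M := by
        have : (1 : ℝ) ≤ 2 ^ d := one_le_pow₀ one_le_two
        refine div_le_div_of_nonneg_right (mul_le_mul_of_nonneg_right ?_ hA)
          (pow_pos P.side_pos d).le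
        rw [pow_succ]
        linarith
  · simpa using hM

lemma haarSq_le {f : (Fin d → ℝ) → ℝ} (hf : Integrable f) (P : DyadicCube d) :
    haarSq f P ≤ 4 ^ (d + 1) * (∫ y, |f y|) ^ 2 / P.side ^ d := by
  have hbound : ∀ x ∈ P.toSet, ‖mdiff f P x ^ 2‖ ≤ (2 ^ (d + 1) * (∫ y, |f y|) / P.side ^ d) ^ 2 :=
    fun x _ => by
      rw [Real.norm_eq_abs, abs_pow]
      exact pow_le_pow_left₀ (abs_nonneg _) (abs_mdiff_le hf P x) 2
  have hfin : volume P.toSet < ∞ := by rw [volume_toSet]; exact ENNReal.ofReal_lt_top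
  calc haarSq f P ≤ ‖haarSq f P‖ := Real.le_norm_self _
    _ ≤ (2 ^ (d + 1) * (∫ y, |f y|) / P.side ^ d) ^ 2 * volume.real P.toSet :=
      norm_setIntegral_le_of_norm_le_const hfin hbound
    _ = 4 ^ (d + 1) * (∫ y, |f y|) ^ 2 / P.side ^ d := by
      rw [measureReal_def, toReal_volume_toSet,
        show (4 : ℝ) ^ (d + 1) = (2 ^ (d + 1)) ^ 2 by rw [← pow_mul, mul_comm, pow_mul]; norm_num]
      have := P.side_pos
      field_simp

lemma j_lt_and_subset_of_haarSq_ne_zero {f : (Fin d → ℝ) → ℝ} {Q₀ P : DyadicCube d}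
    (hf : Function.support f ⊆ Q₀.toSet) (hP : haarSq f P ≠ 0)
    (hout : volume (P.toSet ∩ Q₀.toSetᶜ) ≠ 0) : P.j < Q₀.j ∧ Q₀.toSet ⊆ P.toSet := by
  have hmeet : (P.toSet ∩ Q₀.toSet).Nonempty := by
    by_contra h
    exact hP (haarSq_eq_zero_of_eqOn_zero fun x hx =>
      Function.notMem_support.mp fun hfx => h ⟨x, hx, hf hfx⟩)
  have hlt : P.j < Q₀.j := by
    by_contra! hle
    exact hout (by rw [← Set.sdiff_eq, Set.sdiff_eq_empty.mpr (toSet_subset_of_j_le hle hmeet),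
      measure_empty])
  exact ⟨hlt, toSet_subset_of_j_le hlt.le (Set.inter_comm _ _ ▸ hmeet)⟩

end DyadicCube

/-- `‖g‖₁ / |3K| · 4^{d+1} ‖f‖₁² / |P|` for `K` of generation `n` and `P` of generation `n + j`,
where `G = ‖g‖₁` and `A = ‖f‖₁`. -/
noncomputable def levelBound (d j : ℕ) (G A : ℝ) (n : ℤ) : ℝ :=
  4 ^ (d + 1) * G * A ^ 2 / ((3 * (2 : ℝ) ^ (-n)) ^ d * ((2 : ℝ) ^ (-n) / 2 ^ j) ^ d)

lemma avgAbs_triple_mul_haarSq_le {f g : (Fin d → ℝ) → ℝ} (hf : Integrable f) (hg : Integrable g)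
    {K P : DyadicCube d} {j : ℕ} (hP : P.j = K.j + j) :
    avgAbs g K.triple * haarSq f P ≤ levelBound d j (∫ x, |g x|) (∫ x, |f x|) K.j := by
  have hside : K.side = 2 ^ j * P.side := side_eq_two_pow_mul hP
  have := P.side_pos
  have hG : 0 ≤ ((3 * K.side) ^ d)⁻¹ * ∫ x, |g x| :=
    mul_nonneg (by rw [hside]; positivity) (integral_nonneg fun x => abs_nonneg (g x))
  calc avgAbs g K.triple * haarSq f P
      ≤ ((3 * K.side) ^ d)⁻¹ * (∫ x, |g x|) * (4 ^ (d + 1) * (∫ x, |f x|) ^ 2 / P.side ^ d) := by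
        rw [← toReal_volume_triple]
        exact mul_le_mul (avgAbs_le hg _) (haarSq_le hf P) (haarSq_nonneg f P)
          (toReal_volume_triple K ▸ hG)
    _ = levelBound d j (∫ x, |g x|) (∫ x, |f x|) K.j := by
      rw [levelBound, ← side, hside]
      field_simp

lemma setLIntegral_BjIntegrand (j : ℕ) (g f : (Fin d → ℝ) → ℝ) (s : Set (Fin d → ℝ)) :
    ∫⁻ x in s, BjIntegrand j g f x =
      ∑' K : DyadicCube d, ∑' P : {P : DyadicCube d // P.j = K.j + j ∧ P.toSet ⊆ K.triple},
        ENNReal.ofReal (avgAbs g K.triple * (haarSq f P.1 / (volume P.1.toSet).toReal)) *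
          volume (P.1.toSet ∩ s) := by
  have hind : ∀ (a b : ℝ) (A : Set (Fin d → ℝ)) x, ENNReal.ofReal (a * A.indicator (fun _ => b) x)
      = A.indicator (fun _ => ENNReal.ofReal (a * b)) x := fun a b A x => by
    by_cases hx : x ∈ A <;> simp [hx]
  have hmeas : ∀ (c : ℝ≥0∞) (P : DyadicCube d), Measurable (P.toSet.indicator fun _ => c) :=
    fun c P => measurable_const.indicator P.measurableSet_toSet
  simp_rw [BjIntegrand, hind]
  rw [lintegral_tsum fun K => (Measurable.tsum fun P => hmeas _ _).aemeasurable]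
  refine tsum_congr fun K => ?_
  rw [lintegral_tsum fun P => (hmeas _ _).aemeasurable]
  refine tsum_congr fun P => ?_
  rw [lintegral_indicator_const P.1.measurableSet_toSet,
    Measure.restrict_apply P.1.measurableSet_toSet]

lemma tsum_Bj_term_compl_le {f g : (Fin d → ℝ) → ℝ} (hf : Integrable f) (hg : Integrable g)
    {Q₀ : DyadicCube d} (hsf : Function.support f ⊆ Q₀.toSet) (j : ℕ) (K : DyadicCube d) :
    ∑' P : {P : DyadicCube d // P.j = K.j + j ∧ P.toSet ⊆ K.triple},
        ENNReal.ofReal (avgAbs g K.triple * (haarSq f P.1 / (volume P.1.toSet).toReal)) *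
          volume (P.1.toSet ∩ Q₀.toSetᶜ) ≤
      if K.j < Q₀.j - j then
        K.triple.indicator
          (fun _ => ENNReal.ofReal (levelBound d j (∫ x, |g x|) (∫ x, |f x|) K.j)) Q₀.center
      else 0 := by
  have hT : ∀ P : {P : DyadicCube d // P.j = K.j + j ∧ P.toSet ⊆ K.triple},
      ENNReal.ofReal (avgAbs g K.triple * (haarSq f P.1 / (volume P.1.toSet).toReal)) *
        volume (P.1.toSet ∩ Q₀.toSetᶜ) ≠ 0 → P.1.j < Q₀.j ∧ Q₀.toSet ⊆ P.1.toSet := by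
    intro P hP
    obtain ⟨h1, h2⟩ := mul_ne_zero_iff.mp hP
    exact j_lt_and_subset_of_haarSq_ne_zero hsf (fun h => h1 (by simp [h])) h2
  refine tsum_mem_of_support_subsingleton (α := ℝ≥0∞) (s := Set.Iic _) ?_
    (Set.mem_Iic.mpr bot_le) fun P => ?_
  · intro P hP P' hP'
    exact Subtype.ext (eq_of_j_eq_of_mem (P.2.1.trans P'.2.1.symm)
      ((hT P hP).2 Q₀.center_mem_toSet) ((hT P' hP').2 Q₀.center_mem_toSet))
  by_cases hP : ENNReal.ofReal (avgAbs g K.triple * (haarSq f P.1 / (volume P.1.toSet).toReal)) *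
      volume (P.1.toSet ∩ Q₀.toSetᶜ) = 0
  · rw [Set.mem_Iic, hP]
    exact zero_le
  obtain ⟨hlt, hsub⟩ := hT P hP
  have hK : K.j < Q₀.j - j := by have := P.2.1; omega
  rw [Set.mem_Iic, if_pos hK, Set.indicator_of_mem (P.2.2 (hsub Q₀.center_mem_toSet))]
  calc _ ≤ ENNReal.ofReal (avgAbs g K.triple * (haarSq f P.1 / (volume P.1.toSet).toReal)) *
        volume P.1.toSet := by gcongr; exact Set.inter_subset_left
    _ = ENNReal.ofReal (avgAbs g K.triple * haarSq f P.1) := by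
      rw [volume_toSet, ← ENNReal.ofReal_mul (mul_nonneg (avgAbs_nonneg _ _)
        (div_nonneg (haarSq_nonneg _ _) ENNReal.toReal_nonneg)), ← volume_toSet,
        toReal_volume_toSet, mul_assoc, div_mul_cancel₀ _ (pow_pos P.1.side_pos d).ne']
    _ ≤ _ := ENNReal.ofReal_le_ofReal (avgAbs_triple_mul_haarSq_le hf hg P.2.1)

lemma three_pow_mul_levelBound_le (hd : 0 < d) {j k : ℕ} {n : ℤ} {s ag af : ℝ} (hs : 0 < s)
    (hag : 0 ≤ ag) (hn : (2 : ℝ) ^ (-n) = 2 ^ (j + k + 1) * s) :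
    3 ^ d * levelBound d j (s ^ d * ag) (s ^ d * af) n ≤
      4 * (1 / 4) ^ k * ((2 : ℝ) ^ (-(j * d : ℤ)) * ag * af ^ 2 * s ^ d) := by
  have hX : 0 ≤ (2 : ℝ) ^ (-(j * d : ℤ)) * ag * af ^ 2 * s ^ d := by positivity
  have hdecay : ((((2 : ℝ) ^ k) ^ d) ^ 2)⁻¹ ≤ (1 / 4) ^ k := by
    rw [one_div, inv_pow,
      show (4 : ℝ) ^ k = (2 ^ k) ^ 2 by rw [← pow_mul, mul_comm, pow_mul]; norm_num]
    gcongr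
    exact le_self_pow₀ (one_le_pow₀ one_le_two) hd.ne'
  calc _ = 4 * ((((2 : ℝ) ^ k) ^ d) ^ 2)⁻¹ * ((2 : ℝ) ^ (-(j * d : ℤ)) * ag * af ^ 2 * s ^ d) := by
        rw [levelBound, hn, show (4 : ℝ) ^ (d + 1) = 4 * (2 ^ d) ^ 2 by
            rw [pow_succ', ← pow_mul, mul_comm d 2, pow_mul]; norm_num,
          show (2 : ℝ) ^ (-(j * d : ℤ)) = ((2 ^ j) ^ d)⁻¹ by
            rw [zpow_neg, ← pow_mul, ← zpow_natCast]; push_cast; rfl,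
          pow_add, pow_add, pow_one]
        simp only [mul_pow, div_pow]
        have ha : (0 : ℝ) < (2 ^ j) ^ d := by positivity
        have hb : (0 : ℝ) < (2 ^ k) ^ d := by positivity
        have ht : (0 : ℝ) < 2 ^ d := by positivity
        have hr : (0 : ℝ) < 3 ^ d := by positivity
        generalize ((2 : ℝ) ^ j) ^ d = a at ha ⊢
        generalize ((2 : ℝ) ^ k) ^ d = b at hb ⊢
        generalize (2 : ℝ) ^ d = t at ht ⊢
        generalize (3 : ℝ) ^ d = r at hr ⊢
        field_simp
    _ ≤ _ := by gcongr

lemma three_pow_mul_tsum_levelBound_le (hd : 0 < d) (j : ℕ) (Q₀ : DyadicCube d) {ag af : ℝ}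
    (hag : 0 ≤ ag) :
    3 ^ d * ∑' k : ℕ, ENNReal.ofReal
        (levelBound d j (Q₀.side ^ d * ag) (Q₀.side ^ d * af) (Q₀.j - j - 1 - k)) ≤
      ENNReal.ofReal (16 / 3 * (2 : ℝ) ^ (-(j * d : ℤ)) * ag * af ^ 2) * volume Q₀.toSet := by
  set X := (2 : ℝ) ^ (-(j * d : ℤ)) * ag * af ^ 2 * Q₀.side ^ d
  have hX : 0 ≤ X := by have := Q₀.side_pos; positivity
  have hterm : ∀ k : ℕ, 3 ^ d * ENNReal.ofReal
      (levelBound d j (Q₀.side ^ d * ag) (Q₀.side ^ d * af) (Q₀.j - j - 1 - k)) ≤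
        ENNReal.ofReal (4 * (1 / 4) ^ k * X) := by
    intro k
    have hside : (2 : ℝ) ^ (-(Q₀.j - j - 1 - k)) = 2 ^ (j + k + 1) * Q₀.side :=
      side_eq_two_pow_mul (Q := ⟨Q₀.j - j - 1 - k, Q₀.m⟩) (P := Q₀) (by push_cast; ring)
    rw [← ENNReal.ofReal_ofNat 3, ← ENNReal.ofReal_pow (by norm_num),
      ← ENNReal.ofReal_mul (by positivity)]
    exact ENNReal.ofReal_le_ofReal (three_pow_mul_levelBound_le hd Q₀.side_pos hag hside)
  have hsum : Summable fun k : ℕ => 4 * (1 / 4 : ℝ) ^ k * X :=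
    ((summable_geometric_of_lt_one (by norm_num) (by norm_num)).mul_left 4).mul_right X
  calc _ = ∑' k : ℕ, 3 ^ d * ENNReal.ofReal
        (levelBound d j (Q₀.side ^ d * ag) (Q₀.side ^ d * af) (Q₀.j - j - 1 - k)) :=
        ENNReal.tsum_mul_left.symm
    _ ≤ ∑' k : ℕ, ENNReal.ofReal (4 * (1 / 4) ^ k * X) := ENNReal.tsum_le_tsum hterm
    _ = ENNReal.ofReal (∑' k : ℕ, 4 * (1 / 4) ^ k * X) :=
        (ENNReal.ofReal_tsum_of_nonneg (fun k => by positivity) hsum).symm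
    _ = _ := by
      rw [tsum_mul_right, tsum_mul_left, tsum_geometric_of_lt_one (by norm_num) (by norm_num),
        volume_toSet, ← ENNReal.ofReal_mul (by positivity)]
      congr 1
      norm_num [X]
      ring

/-- The part of `B_j(g,f)` coming from outside `Q₀` satisfies
`B_j|_{Q₀^∁}(g,f) ≤ C(d) 2^{-jd} ⟨|g|⟩_{Q₀} ⟨|f|⟩_{Q₀}² |Q₀|`, for `f, g` supported in `Q₀`. -/
theorem Bj_outside_Q0 (d : ℕ) :
    ∃ C > 0, ∀ (j : ℕ) (f g : (Fin d → ℝ) → ℝ) (Q₀ : DyadicCube d),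
      Integrable f → Integrable g →
      Function.support f ⊆ Q₀.toSet → Function.support g ⊆ Q₀.toSet →
      (∫⁻ x in Q₀.toSetᶜ, BjIntegrand j g f x) ≤
        ENNReal.ofReal (C * (2 : ℝ) ^ (-(j * d : ℤ)) *
          avgAbs g Q₀.toSet * avgAbs f Q₀.toSet ^ 2) * volume Q₀.toSet := by
  refine ⟨16 / 3, by norm_num, fun j f g Q₀ hf hg hsf hsg => ?_⟩
  rcases Nat.eq_zero_or_pos d with rfl | hd
  · rw [Set.eq_univ_of_forall (s := Q₀.toSet) fun x (i : Fin 0) => i.elim0, Set.compl_univ,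
      Measure.restrict_empty, lintegral_zero_measure]
    exact zero_le
  calc ∫⁻ x in Q₀.toSetᶜ, BjIntegrand j g f x
      ≤ ∑' K : DyadicCube d, if K.j < Q₀.j - j then K.triple.indicator
          (fun _ => ENNReal.ofReal (levelBound d j (∫ x, |g x|) (∫ x, |f x|) K.j)) Q₀.center
        else 0 := by
        rw [setLIntegral_BjIntegrand]
        exact ENNReal.tsum_le_tsum fun K => tsum_Bj_term_compl_le hf hg hsf j K
    _ ≤ 3 ^ d * ∑' k : ℕ, ENNReal.ofReal
          (levelBound d j (∫ x, |g x|) (∫ x, |f x|) (Q₀.j - j - 1 - k)) :=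
        tsum_ite_indicator_triple_le _ _ fun n =>
          ENNReal.ofReal (levelBound d j (∫ x, |g x|) (∫ x, |f x|) n)
    _ ≤ _ := by
        rw [integral_abs_eq_mul_avgAbs hsf, integral_abs_eq_mul_avgAbs hsg]
        exact three_pow_mul_tsum_levelBound_le hd j Q₀ (avgAbs_nonneg _ _)
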